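/- arXiv:2201.05745 — 3 statements merged into one kernel-verified Lean document; each statement's English description precedes it below -/
import Mathlib

section
/- Let x_1, …, x_N be points in ℝ^n, let A be an n×n real symmetric positive definite matrix, let b ∈ ℝ^n, and set the target samples x̄_j := A x_j + b for j = 1, …, N. Then for every coupling with uniform marginals γ (an N×N matrix with nonnegative entries whose every row sum and every column sum equals 1/N), one has Σ_{i,j} γ_{ij} ‖x_i − x̄_j‖² ≥ (1/N) Σ_i ‖x_i − x̄_i‖². In other words, the diagonal coupling γ = (1/N)·Id attains the minimum of the discrete Monge–Kantorovich problem with cost c(x, x̄) = ‖x − x̄‖², so the map T(x_i) = A x_i + b is an optimal transport map between the two uniform empirical distributions. -/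
open Matrix

/-- Squared Euclidean norm of a vector in ℝ^n. -/
noncomputable def sqnorm {n : ℕ} (v : Fin n → ℝ) : ℝ := ∑ k, (v k) ^ 2

/-!
Expanding the square, `‖x_i - x̄_j‖² = f i + g j - 2 ⟪x_i, A x_j⟫` with `f` depending only on
`i` and `g` only on `j`, so the marginal constraints fix the `f`- and `g`-parts of the cost of
every coupling. It remains to show that no coupling beats the diagonal on the cross term
`h i j = ⟪x_i, A x_j⟫`. Since `A` is positive semidefinite, `0 ≤ ⟪x_i - x_j, A (x_i - x_j)⟫`
gives `2 h i j ≤ h i i + h j j`, and averaging this bound against `γ` uses the marginals once more.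
-/

theorem Matrix.PosSemidef.two_mul_dotProduct_mulVec_le {ι : Type*} [Fintype ι]
    {A : Matrix ι ι ℝ} (hA : A.PosSemidef) (u v : ι → ℝ) :
    2 * (u ⬝ᵥ A *ᵥ v) ≤ u ⬝ᵥ A *ᵥ u + v ⬝ᵥ A *ᵥ v := by
  have hsymm : v ⬝ᵥ A *ᵥ u = u ⬝ᵥ A *ᵥ v := by
    rw [dotProduct_mulVec, ← mulVec_transpose, dotProduct_comm,
      ← conjTranspose_eq_transpose_of_trivial, hA.isHermitian.eq]
  have hnonneg : 0 ≤ (u - v) ⬝ᵥ A *ᵥ (u - v) := by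
    simpa using hA.dotProduct_mulVec_nonneg (u - v)
  rw [mulVec_sub, sub_dotProduct, dotProduct_sub, dotProduct_sub, hsymm] at hnonneg
  linarith

section Coupling

variable {ι : Type*} [Fintype ι] {γ : ι → ι → ℝ} {c : ℝ}

theorem sum_sum_mul_left_of_row_sum (hrow : ∀ i, ∑ j, γ i j = c) (f : ι → ℝ) :
    ∑ i, ∑ j, γ i j * f i = c * ∑ i, f i := by
  simp only [← Finset.sum_mul, hrow, Finset.mul_sum]

theorem sum_sum_mul_right_of_col_sum (hcol : ∀ j, ∑ i, γ i j = c) (g : ι → ℝ) :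
    ∑ i, ∑ j, γ i j * g j = c * ∑ j, g j := by
  rw [Finset.sum_comm]
  simp only [← Finset.sum_mul, hcol, Finset.mul_sum]

theorem sum_sum_mul_le_of_two_mul_le (hγ : ∀ i j, 0 ≤ γ i j)
    (hrow : ∀ i, ∑ j, γ i j = c) (hcol : ∀ j, ∑ i, γ i j = c)
    {h : ι → ι → ℝ} (hh : ∀ i j, 2 * h i j ≤ h i i + h j j) :
    ∑ i, ∑ j, γ i j * h i j ≤ c * ∑ i, h i i := by
  have hbound : 2 * ∑ i, ∑ j, γ i j * h i j ≤ ∑ i, ∑ j, γ i j * (h i i + h j j) := by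
    rw [Finset.mul_sum]
    refine Finset.sum_le_sum fun i _ => ?_
    rw [Finset.mul_sum]
    refine Finset.sum_le_sum fun j _ => ?_
    rw [mul_left_comm]
    exact mul_le_mul_of_nonneg_left (hh i j) (hγ i j)
  simp only [mul_add, Finset.sum_add_distrib, sum_sum_mul_left_of_row_sum hrow,
    sum_sum_mul_right_of_col_sum hcol] at hbound
  linarith

theorem mul_sum_diag_le_sum_sum_mul (hγ : ∀ i j, 0 ≤ γ i j)
    (hrow : ∀ i, ∑ j, γ i j = c) (hcol : ∀ j, ∑ i, γ i j = c)
    (f g : ι → ℝ) {h : ι → ι → ℝ} (hh : ∀ i j, 2 * h i j ≤ h i i + h j j) :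
    c * ∑ i, (f i + g i - 2 * h i i) ≤ ∑ i, ∑ j, γ i j * (f i + g j - 2 * h i j) := by
  have hcross := sum_sum_mul_le_of_two_mul_le hγ hrow hcol hh
  simp only [mul_sub, mul_add, Finset.sum_sub_distrib, Finset.sum_add_distrib,
    sum_sum_mul_left_of_row_sum hrow, sum_sum_mul_right_of_col_sum hcol,
    mul_left_comm _ (2 : ℝ), ← Finset.mul_sum]
  linarith

end Coupling

theorem sqnorm_sub_add {n : ℕ} (u v w : Fin n → ℝ) :
    sqnorm (u - (v + w)) = (u ⬝ᵥ u - 2 * (u ⬝ᵥ w)) + (v + w) ⬝ᵥ (v + w) - 2 * (u ⬝ᵥ v) := by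
  simp only [sqnorm, dotProduct, Pi.sub_apply, Pi.add_apply, Finset.mul_sum,
    ← Finset.sum_sub_distrib, ← Finset.sum_add_distrib]
  exact Finset.sum_congr rfl fun k _ => by ring

/-- For source samples `x_i`, SPD matrix `A`, bias `b`, and targets `x̄_j = A x_j + b`,
every coupling `γ` with uniform marginals transports at cost at least that of the diagonal
coupling, for the squared Euclidean cost. -/
theorem diagonal_coupling_optimal_affine
    {n N : ℕ} (x : Fin N → Fin n → ℝ)
    (A : Matrix (Fin n) (Fin n) ℝ) (hA : A.PosDef)
    (b : Fin n → ℝ)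
    (xbar : Fin N → Fin n → ℝ) (hxbar : ∀ j, xbar j = A.mulVec (x j) + b)
    (γ : Matrix (Fin N) (Fin N) ℝ)
    (hγnonneg : ∀ i j, 0 ≤ γ i j)
    (hrow : ∀ i, ∑ j, γ i j = 1 / (N : ℝ))
    (hcol : ∀ j, ∑ i, γ i j = 1 / (N : ℝ)) :
    (1 / (N : ℝ)) * ∑ i, sqnorm (x i - xbar i) ≤ ∑ i, ∑ j, γ i j * sqnorm (x i - xbar j) := by
  have hcost : ∀ i j, sqnorm (x i - xbar j) =
      (x i ⬝ᵥ x i - 2 * (x i ⬝ᵥ b)) + xbar j ⬝ᵥ xbar j - 2 * (x i ⬝ᵥ A *ᵥ x j) := by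
    intro i j
    rw [hxbar, sqnorm_sub_add]
  simp only [hcost]
  exact mul_sum_diag_le_sum_sum_mul hγnonneg hrow hcol _ _
    fun i j => hA.posSemidef.two_mul_dotProduct_mulVec_le (x i) (x j)
end

section
/- Let S_1, …, S_N be n×n real symmetric positive definite matrices, let W be an n×n real symmetric positive definite matrix, and set the target samples S̄_j := W · S_j · Wᵀ for j = 1, …, N. Then for every coupling with uniform marginals γ (an N×N matrix with nonnegative entries whose every row sum and every column sum equals 1/N), one has Σ_{i,j} γ_{ij} ‖S_i − S̄_j‖_F² ≥ (1/N) Σ_i ‖S_i − S̄_i‖_F². Hence the diagonal coupling is optimal for the discrete Monge–Kantorovich problem on SPD matrices with the squared Frobenius (Euclidean) cost, and the Bi-Map transformation T(S) = W · S · Wᵀ is an optimal transport map between the two uniform empirical distributions. -/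
/-!
Write `T X = W X W`. The cost splits as `‖S - T S'‖² = ‖S‖² + ‖T S'‖² - 2 ⟪S, T S'⟫`, and the
separable part `‖S_i‖² + ‖T S_j‖²` has the same total under every coupling with uniform
marginals. Since `W` is positive semidefinite, `T` is self-adjoint and positive for the Frobenius
inner product, so `2 ⟪S_i, T S_j⟫ ≤ ⟪S_i, T S_i⟫ + ⟪S_j, T S_j⟫`: the cross term, which enters
with a minus sign, is largest on the diagonal.
-/

open Matrix

/-- Squared Frobenius norm of a square matrix. -/
noncomputable def frobSq {n : ℕ} (M : Matrix (Fin n) (Fin n) ℝ) : ℝ := ∑ i, ∑ j, (M i j) ^ 2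

section Coupling

variable {ι : Type*} [Fintype ι] {γ : Matrix ι ι ℝ} {c : ℝ}

theorem sum_coupling_mul_add (hrow : ∀ i, ∑ j, γ i j = c) (hcol : ∀ j, ∑ i, γ i j = c)
    (f g : ι → ℝ) : ∑ i, ∑ j, γ i j * (f i + g j) = c * ∑ i, (f i + g i) := by
  simp only [mul_add, Finset.sum_add_distrib, Finset.mul_sum]
  congr 1
  · exact Finset.sum_congr rfl fun i _ => by rw [← Finset.sum_mul, hrow]
  · rw [Finset.sum_comm]
    exact Finset.sum_congr rfl fun j _ => by rw [← Finset.sum_mul, hcol]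

theorem sum_coupling_mul_le_of_two_mul_le (hγ : ∀ i j, 0 ≤ γ i j)
    (hrow : ∀ i, ∑ j, γ i j = c) (hcol : ∀ j, ∑ i, γ i j = c) {K : ι → ι → ℝ}
    (hK : ∀ i j, 2 * K i j ≤ K i i + K j j) :
    ∑ i, ∑ j, γ i j * K i j ≤ c * ∑ i, K i i :=
  calc ∑ i, ∑ j, γ i j * K i j ≤ ∑ i, ∑ j, γ i j * (K i i / 2 + K j j / 2) := by
        gcongr with i _ j _
        · exact hγ i j
        · linarith [hK i j]
    _ = c * ∑ i, K i i := by
        rw [sum_coupling_mul_add hrow hcol]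
        simp only [add_halves]

theorem diagonal_le_sum_coupling_mul (hγ : ∀ i j, 0 ≤ γ i j)
    (hrow : ∀ i, ∑ j, γ i j = c) (hcol : ∀ j, ∑ i, γ i j = c) (f g : ι → ℝ) {K : ι → ι → ℝ}
    (hK : ∀ i j, 2 * K i j ≤ K i i + K j j) :
    c * ∑ i, (f i + g i - 2 * K i i) ≤ ∑ i, ∑ j, γ i j * (f i + g j - 2 * K i j) := by
  have hker := sum_coupling_mul_le_of_two_mul_le hγ hrow hcol hK
  calc c * ∑ i, (f i + g i - 2 * K i i) = c * ∑ i, (f i + g i) - 2 * (c * ∑ i, K i i) := by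
        rw [Finset.sum_sub_distrib, ← Finset.mul_sum]; ring
    _ ≤ ∑ i, ∑ j, γ i j * (f i + g j) - 2 * ∑ i, ∑ j, γ i j * K i j := by
        rw [sum_coupling_mul_add hrow hcol]; linarith
    _ = ∑ i, ∑ j, γ i j * (f i + g j - 2 * K i j) := by
        simp only [mul_sub, Finset.sum_sub_distrib, Finset.mul_sum, mul_left_comm _ (2 : ℝ)]

end Coupling

namespace Matrix

variable {m : Type*}

theorem PosSemidef.transpose_eq_self {W : Matrix m m ℝ} (hW : W.PosSemidef) : Wᵀ = W := by
  simpa only [conjTranspose_eq_transpose_of_trivial] using hW.1.eq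

variable [Fintype m]

open scoped MatrixOrder ComplexOrder in
theorem PosSemidef.trace_mul_nonneg {𝕜 : Type*} [RCLike 𝕜] {A B : Matrix m m 𝕜}
    (hA : A.PosSemidef) (hB : B.PosSemidef) : 0 ≤ (A * B).trace := by
  classical
  obtain ⟨C, rfl⟩ := CStarAlgebra.nonneg_iff_eq_star_mul_self.mp hB.nonneg
  rw [star_eq_conjTranspose, ← Matrix.mul_assoc, trace_mul_comm, ← Matrix.mul_assoc]
  exact (hA.mul_mul_conjTranspose_same C).trace_nonneg

variable {W : Matrix m m ℝ}

theorem trace_transpose_mul_conj_comm (hW : Wᵀ = W) (A B : Matrix m m ℝ) :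
    trace (Aᵀ * (W * B * W)) = trace (Bᵀ * (W * A * W)) := by
  rw [← trace_transpose, trace_mul_cycle']
  simp only [transpose_mul, transpose_transpose, hW, Matrix.mul_assoc]

theorem PosSemidef.trace_transpose_mul_conj_nonneg (hW : W.PosSemidef) (A : Matrix m m ℝ) :
    0 ≤ trace (Aᵀ * (W * A * W)) := by
  rw [← Matrix.mul_assoc, ← Matrix.mul_assoc, ← conjTranspose_eq_transpose_of_trivial]
  exact (hW.conjTranspose_mul_mul_same A).trace_mul_nonneg hW

theorem PosSemidef.two_mul_trace_transpose_mul_conj_le (hW : W.PosSemidef) (A B : Matrix m m ℝ) :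
    2 * trace (Aᵀ * (W * B * W)) ≤ trace (Aᵀ * (W * A * W)) + trace (Bᵀ * (W * B * W)) := by
  have hdiff := hW.trace_transpose_mul_conj_nonneg (A - B)
  have hsymm := trace_transpose_mul_conj_comm hW.transpose_eq_self A B
  simp only [transpose_sub, Matrix.mul_sub, Matrix.sub_mul, trace_sub] at hdiff
  linarith

end Matrix

theorem frobSq_eq_trace {n : ℕ} (M : Matrix (Fin n) (Fin n) ℝ) : frobSq M = trace (Mᵀ * M) := by
  simp only [frobSq, trace, diag, mul_apply, transpose_apply, sq]
  exact Finset.sum_comm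

theorem frobSq_sub {n : ℕ} (A B : Matrix (Fin n) (Fin n) ℝ) :
    frobSq (A - B) = frobSq A + frobSq B - 2 * trace (Aᵀ * B) := by
  have hsymm : trace (Bᵀ * A) = trace (Aᵀ * B) := by
    rw [← trace_transpose, transpose_mul, transpose_transpose]
  simp only [frobSq_eq_trace, transpose_sub, Matrix.mul_sub, Matrix.sub_mul, trace_sub, hsymm]
  ring

theorem diagonal_coupling_optimal_biMap_general
    {n N : ℕ} (S : Fin N → Matrix (Fin n) (Fin n) ℝ)
    (W : Matrix (Fin n) (Fin n) ℝ) (hW : W.PosDef)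
    (Sbar : Fin N → Matrix (Fin n) (Fin n) ℝ) (hSbar : ∀ j, Sbar j = W * S j * Wᵀ)
    (γ : Matrix (Fin N) (Fin N) ℝ)
    (hγnonneg : ∀ i j, 0 ≤ γ i j)
    (hrow : ∀ i, ∑ j, γ i j = 1 / (N : ℝ))
    (hcol : ∀ j, ∑ i, γ i j = 1 / (N : ℝ)) :
    (1 / (N : ℝ)) * ∑ i, frobSq (S i - Sbar i) ≤ ∑ i, ∑ j, γ i j * frobSq (S i - Sbar j) := by
  simp only [frobSq_sub, hSbar, hW.posSemidef.transpose_eq_self]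
  exact diagonal_le_sum_coupling_mul hγnonneg hrow hcol _ _
    fun i j ↦ hW.posSemidef.two_mul_trace_transpose_mul_conj_le (S i) (S j)

/-- For SPD sources `S_i`, SPD `W`, and targets `S̄_j = W · S_j · Wᵀ`, every coupling with
uniform marginals transports at squared-Frobenius cost at least that of the diagonal coupling;
hence the Bi-Map `T(S) = W S Wᵀ` is an optimal transport map. -/
theorem diagonal_coupling_optimal_biMap
    {n N : ℕ} (S : Fin N → Matrix (Fin n) (Fin n) ℝ) (hS : ∀ i, (S i).PosDef)
    (W : Matrix (Fin n) (Fin n) ℝ) (hW : W.PosDef)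
    (Sbar : Fin N → Matrix (Fin n) (Fin n) ℝ) (hSbar : ∀ j, Sbar j = W * S j * Wᵀ)
    (γ : Matrix (Fin N) (Fin N) ℝ)
    (hγnonneg : ∀ i j, 0 ≤ γ i j)
    (hrow : ∀ i, ∑ j, γ i j = 1 / (N : ℝ))
    (hcol : ∀ j, ∑ i, γ i j = 1 / (N : ℝ)) :
    (1 / (N : ℝ)) * ∑ i, frobSq (S i - Sbar i) ≤ ∑ i, ∑ j, γ i j * frobSq (S i - Sbar j) :=
  diagonal_coupling_optimal_biMap_general S W hW Sbar hSbar γ hγnonneg hrow hcol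
end

section
/- Let A and B be n×n real symmetric matrices and define the curve γ(t) := exp((1 − t)·A + t·B) for t ∈ ℝ. Then γ(0) = exp(A), γ(1) = exp(B), each γ(t) is a real symmetric positive definite matrix, and for all real s, t one has d_LEM(γ(s), γ(t)) = |t − s| · ‖A − B‖_F = |t − s| · d_LEM(exp(A), exp(B)). In particular, γ is a constant-speed path realizing the Log-Euclidean distance between exp(A) and exp(B). -/
open Matrix

/-- Frobenius norm of a square matrix. -/
noncomputable def frobNorm {n : ℕ} (M : Matrix (Fin n) (Fin n) ℝ) : ℝ := Real.sqrt (frobSq M)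

/-- The (unique) symmetric matrix logarithm of a symmetric positive definite matrix:
`symLog S` is the symmetric matrix `A` with `exp A = S` whenever such a matrix exists
(which is the case exactly when `S` is SPD), and is junk (`0`) otherwise. -/
noncomputable def symLog {n : ℕ} (S : Matrix (Fin n) (Fin n) ℝ) : Matrix (Fin n) (Fin n) ℝ :=
  letI := Classical.propDecidable
    (∃ A : Matrix (Fin n) (Fin n) ℝ, A.IsSymm ∧ NormedSpace.exp A = S)
  if h : ∃ A : Matrix (Fin n) (Fin n) ℝ, A.IsSymm ∧ NormedSpace.exp A = S then h.choose else 0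

/-- The Log-Euclidean distance `d_LEM(S₁, S₂) = ‖log S₁ − log S₂‖_F` on SPD matrices. -/
noncomputable def dLEM {n : ℕ} (S₁ S₂ : Matrix (Fin n) (Fin n) ℝ) : ℝ :=
  frobNorm (symLog S₁ - symLog S₂)

/-!
Over the reals, `exp` restricted to symmetric matrices is inverted by the logarithm of the
continuous functional calculus, so `symLog (exp C) = C` for symmetric `C`. Hence the logarithm of
`γ t` is the affine segment `(1 - t) • A + t • B`, and the Log-Euclidean distance along `γ` is the
Frobenius norm of `(t - s) • (A - B)`. Positive definiteness of `exp C` comes from the same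
calculus: `exp C = cfc Real.exp C` is positive semidefinite, and it is invertible.
-/

section ExpLog

open scoped Matrix.Norms.L2Operator MatrixOrder

variable {ι : Type*} [Fintype ι] [DecidableEq ι]

theorem Matrix.IsHermitian.posDef_exp {C : Matrix ι ι ℝ} (hC : C.IsHermitian) :
    (NormedSpace.exp C).PosDef :=
  (nonneg_iff_posSemidef.mp hC.isSelfAdjoint.exp_nonneg).posDef_iff_isUnit.mpr (isUnit_exp C)

theorem Matrix.IsHermitian.exp_injective {A B : Matrix ι ι ℝ} (hA : A.IsHermitian)
    (hB : B.IsHermitian) (h : NormedSpace.exp A = NormedSpace.exp B) : A = B := by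
  rw [← CFC.log_exp A hA.isSelfAdjoint, ← CFC.log_exp B hB.isSelfAdjoint, h]

end ExpLog

section LogEuclidean

variable {n : ℕ}

theorem symLog_exp {C : Matrix (Fin n) (Fin n) ℝ} (hC : C.IsSymm) :
    symLog (NormedSpace.exp C) = C := by
  have hex : ∃ A : Matrix (Fin n) (Fin n) ℝ, A.IsSymm ∧ NormedSpace.exp A = NormedSpace.exp C :=
    ⟨C, hC, rfl⟩
  rw [symLog, dif_pos hex]
  exact (isHermitian_iff_isSymm.mpr hex.choose_spec.1).exp_injective
    (isHermitian_iff_isSymm.mpr hC) hex.choose_spec.2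

theorem frobNorm_smul (c : ℝ) (M : Matrix (Fin n) (Fin n) ℝ) :
    frobNorm (c • M) = |c| * frobNorm M := by
  have hsq : frobSq (c • M) = c ^ 2 * frobSq M := by
    simp [frobSq, Finset.mul_sum, mul_pow]
  rw [frobNorm, frobNorm, hsq, Real.sqrt_mul (sq_nonneg c), Real.sqrt_sq_eq_abs]

theorem dLEM_exp_exp {A B : Matrix (Fin n) (Fin n) ℝ} (hA : A.IsSymm) (hB : B.IsSymm) :
    dLEM (NormedSpace.exp A) (NormedSpace.exp B) = frobNorm (A - B) := by
  rw [dLEM, symLog_exp hA, symLog_exp hB]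

end LogEuclidean

/-- The curve `γ(t) = exp((1−t)A + tB)` joins `exp A` to `exp B` through SPD matrices and is a
constant-speed path realizing the Log-Euclidean distance:
`d_LEM(γ(s), γ(t)) = |t − s| · ‖A − B‖_F = |t − s| · d_LEM(exp A, exp B)`. -/
theorem logEuclidean_geodesic
    {n : ℕ} (A B : Matrix (Fin n) (Fin n) ℝ) (hA : A.IsSymm) (hB : B.IsSymm)
    (γ : ℝ → Matrix (Fin n) (Fin n) ℝ)
    (hγ : ∀ t : ℝ, γ t = NormedSpace.exp ((1 - t) • A + t • B)) :
    γ 0 = NormedSpace.exp A ∧ γ 1 = NormedSpace.exp B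
    ∧ (∀ t : ℝ, (γ t).PosDef)
    ∧ (∀ s t : ℝ, dLEM (γ s) (γ t) = |t - s| * frobNorm (A - B)
        ∧ dLEM (γ s) (γ t) = |t - s| * dLEM (NormedSpace.exp A) (NormedSpace.exp B)) := by
  have hsymm : ∀ t : ℝ, ((1 - t) • A + t • B).IsSymm := fun t => (hA.smul _).add (hB.smul _)
  have hdist : ∀ s t : ℝ, dLEM (γ s) (γ t) = |t - s| * frobNorm (A - B) := fun s t => by
    rw [hγ, hγ, dLEM_exp_exp (hsymm s) (hsymm t), ← frobNorm_smul]
    congr 1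
    module
  refine ⟨by simp [hγ], by simp [hγ], fun t => ?_, fun s t => ⟨hdist s t, ?_⟩⟩
  · rw [hγ]
    exact (isHermitian_iff_isSymm.mpr (hsymm t)).posDef_exp
  · rw [hdist, dLEM_exp_exp hA hB]
end
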